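/- Let H be a hb-graph on Fin n with hb-edges e_1, …, e_p of m-cardinalities ρ_k satisfying 1 ≤ ρ_k ≤ r, where r ≥ 2 is the m-range of H, and let A_str be the e-adjacency hypermatrix of its straightforward m-uniformized hb-graph with single null vertex N_1. Then the sum of the entries of A_str over all tuples whose first coordinate is N_1 equals Σ_k (r − ρ_k) = Σ_{j=1}^{r−1} (r − j) · |{k : ρ_k = j}|. -/

import Mathlib

/-- The hb-edges of the straightforward m-uniformized hb-graph: the original
multiplicities on the original vertices `Sum.inl i`, and multiplicity `r − ρ_k`
on the single null vertex `N_1 = Sum.inr ()`, where `ρ_k = Σ_j e_k(j)` is the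
m-cardinality of the hb-edge. -/
def strEdge (n p r : ℕ) (e : Fin p → Fin n → ℕ) (k : Fin p) :
    Fin n ⊕ Unit → ℕ
  | Sum.inl i => e k i
  | Sum.inr _ => r - ∑ j, e k j

/-- The e-adjacency hypermatrix of the straightforward m-uniformized hb-graph:
`A_str(t) = Σ_k (∏_v ê_k(v)!)/(r−1)! · [t realizes ê_k]`. -/
noncomputable def Astr (n p r : ℕ) (e : Fin p → Fin n → ℕ)
    (t : Fin r → Fin n ⊕ Unit) : ℝ :=
  ∑ k, if ∀ v, (Finset.univ.filter (fun s => t s = v)).card = strEdge n p r e k v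
       then ((∏ v, (strEdge n p r e k v).factorial : ℕ) : ℝ) / (r - 1).factorial
       else 0

/-!
Fix a hb-edge `ê` of the uniformized hb-graph, viewed as a multiplicity function `c` of total
mass `r = m + 1`. The tuples realizing `c` number `(m + 1)! / ∏ c!`, and those starting with a
given vertex `v` are obtained by prepending `v` to a tuple of length `m` realizing `c` with one
copy of `v` removed, so there are `c v · m! / ∏ c!` of them. Weighting by `∏ c! / m!`, the
tuples starting with the null vertex therefore contribute exactly `c N₁ = r − ρ` per hb-edge.
-/

open Finset
open scoped Nat

section RealizingTuples

variable {V : Type*} [DecidableEq V]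

lemma card_filter_cons_eq (v u : V) {m : ℕ} (t : Fin m → V) :
    #{s | (Fin.cons v t : Fin (m + 1) → V) s = u} = (if v = u then 1 else 0) + #{s | t s = u} := by
  rw [Fin.card_filter_univ_succ']
  simp only [Fin.cons_zero, Fin.cons_succ]

variable [Fintype V]

def realizingTuples (m : ℕ) (c : V → ℕ) : Finset (Fin m → V) :=
  {t | ∀ v, #{s | t s = v} = c v}

lemma cons_mem_realizingTuples_iff {m : ℕ} {c : V → ℕ} {v : V} (hv : 1 ≤ c v)
    (t : Fin m → V) :
    Fin.cons v t ∈ realizingTuples (m + 1) c ↔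
      t ∈ realizingTuples m (Function.update c v (c v - 1)) := by
  simp only [realizingTuples, mem_filter, mem_univ, true_and, card_filter_cons_eq]
  refine forall_congr' fun u => ?_
  rcases eq_or_ne v u with rfl | hne
  · simp only [if_true, Function.update_self]
    omega
  · simp [hne, Function.update_of_ne hne.symm]

lemma filter_head_eq_realizingTuples_eq_empty {m : ℕ} {c : V → ℕ} {v : V} (hv : c v = 0) :
    {t ∈ realizingTuples (m + 1) c | t 0 = v} = ∅ := by
  refine filter_eq_empty_iff.mpr fun t ht h0 => ?_
  have hcard := (mem_filter.mp ht).2 v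
  rw [hv, card_eq_zero, filter_eq_empty_iff] at hcard
  exact hcard (mem_univ 0) h0

lemma card_filter_head_eq_realizingTuples {m : ℕ} {c : V → ℕ} {v : V} (hv : 1 ≤ c v) :
    #{t ∈ realizingTuples (m + 1) c | t 0 = v} =
      #(realizingTuples m (Function.update c v (c v - 1))) := by
  refine card_nbij' Fin.tail (fun t => Fin.cons v t) (fun t ht => ?_) (fun t ht => ?_)
    (fun t ht => ?_) (fun t _ => Fin.tail_cons (α := fun _ => V) v t)
  · obtain ⟨ht, h0⟩ := mem_filter.mp ht
    rw [← Fin.cons_self_tail t, h0, cons_mem_realizingTuples_iff hv] at ht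
    exact ht
  · exact mem_filter.mpr ⟨(cons_mem_realizingTuples_iff hv t).mpr ht,
      Fin.cons_zero (α := fun _ => V) v t⟩
  · rw [← (mem_filter.mp ht).2]
    exact Fin.cons_self_tail t

lemma sum_update_pred_add_one {c : V → ℕ} {v : V} (hv : 1 ≤ c v) :
    ∑ u, Function.update c v (c v - 1) u + 1 = ∑ u, c u := by
  rw [sum_update_of_mem (mem_univ v), sdiff_singleton_eq_erase,
    ← add_sum_erase _ c (mem_univ v)]
  omega

lemma prod_factorial_eq_mul_prod_factorial_update {c : V → ℕ} {v : V} (hv : 1 ≤ c v) :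
    ∏ u, (c u)! = c v * ∏ u, (Function.update c v (c v - 1) u)! := by
  rw [← mul_prod_erase _ _ (mem_univ v), ← mul_prod_erase _ _ (mem_univ v),
    Function.update_self, ← mul_assoc, Nat.mul_factorial_pred (by omega)]
  congr 1
  exact prod_congr rfl fun u hu => by rw [Function.update_of_ne (ne_of_mem_erase hu)]

lemma card_filter_head_eq_mul_prod_factorial_of_forall {m : ℕ}
    (hcount : ∀ c : V → ℕ, ∑ v, c v = m → #(realizingTuples m c) * ∏ v, (c v)! = m !)
    {c : V → ℕ} (hc : ∑ v, c v = m + 1) (v : V) :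
    #{t ∈ realizingTuples (m + 1) c | t 0 = v} * ∏ u, (c u)! = c v * m ! := by
  rcases Nat.eq_zero_or_pos (c v) with hv | hv
  · simp [filter_head_eq_realizingTuples_eq_empty hv, hv]
  · have hsum := sum_update_pred_add_one hv
    rw [card_filter_head_eq_realizingTuples hv, prod_factorial_eq_mul_prod_factorial_update hv,
      mul_left_comm, hcount _ (by omega)]

theorem card_realizingTuples_mul_prod_factorial {m : ℕ} {c : V → ℕ} (hc : ∑ v, c v = m) :
    #(realizingTuples m c) * ∏ v, (c v)! = m ! := by
  induction m generalizing c with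
  | zero =>
    have hc0 : ∀ v, c v = 0 := fun v => sum_eq_zero_iff.mp hc v (mem_univ v)
    have huniv : realizingTuples 0 c = univ := by
      ext t
      simp [realizingTuples, hc0]
    simp [huniv, hc0]
  | succ m ih =>
    rw [card_eq_sum_card_fiberwise (f := fun t => t 0) (t := univ) fun _ _ => mem_univ _,
      sum_mul, sum_congr rfl fun v _ => card_filter_head_eq_mul_prod_factorial_of_forall
        (fun _ => ih) hc v, ← sum_mul, hc, Nat.factorial_succ]

theorem sum_filter_head_eq_ite_prod_factorial_div {m : ℕ} {c : V → ℕ}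
    (hc : ∑ v, c v = m + 1) (v : V) :
    (∑ t ∈ univ.filter (fun t : Fin (m + 1) → V => t 0 = v),
      if ∀ u, #{s | t s = u} = c u then ((∏ u, (c u)! : ℕ) : ℝ) / m ! else 0) = c v := by
  rw [← sum_filter, filter_comm, sum_const, nsmul_eq_mul, ← mul_div_assoc,
    div_eq_iff (by positivity)]
  exact_mod_cast card_filter_head_eq_mul_prod_factorial_of_forall
    (fun _ => card_realizingTuples_mul_prod_factorial) hc v

end RealizingTuples

theorem sum_tsub_eq_sum_Icc_mul_card_filter {ι : Type*} [Fintype ι] (f : ι → ℕ) {r : ℕ}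
    (hlo : ∀ i, 1 ≤ f i) (hub : ∀ i, f i ≤ r) :
    ∑ i, (r - f i) = ∑ q ∈ Icc 1 (r - 1), (r - q) * #{i | f i = q} := by
  have hmaps : ∀ i ∈ (univ : Finset ι), f i ∈ Icc 1 r := fun i _ => mem_Icc.mpr ⟨hlo i, hub i⟩
  rw [← sum_fiberwise_of_maps_to hmaps]
  symm
  refine sum_subset (Icc_subset_Icc_right (Nat.sub_le r 1)) (fun q hq hq' => ?_) |>.trans ?_
  · simp only [mem_Icc] at hq hq'
    simp [show q = r by omega]
  · refine sum_congr rfl fun q _ => ?_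
    rw [sum_congr rfl fun i hi => by rw [(mem_filter.mp hi).2], sum_const, smul_eq_mul, mul_comm]

lemma sum_strEdge (n p r : ℕ) (e : Fin p → Fin n → ℕ) (k : Fin p) (hk : ∑ j, e k j ≤ r) :
    ∑ v, strEdge n p r e k v = r := by
  rw [Fintype.sum_sum_type]
  exact (congrArg _ (Fintype.sum_unique _)).trans (Nat.add_sub_cancel' hk)

/-- For a hb-graph on `Fin n` with hb-edges of m-cardinalities `ρ_k` satisfying
`1 ≤ ρ_k ≤ r`, where `r ≥ 2` is the m-range, the sum of the entries of the
straightforward e-adjacency hypermatrix over all tuples whose first coordinate is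
the null vertex `N_1` equals `Σ_k (r − ρ_k) = Σ_{j=1}^{r−1} (r − j) · |{k : ρ_k = j}|`. -/
theorem stmt11 (n p r : ℕ) (hr : 2 ≤ r) (e : Fin p → Fin n → ℕ)
    (hlo : ∀ k, 1 ≤ ∑ j, e k j) (hub : ∀ k, ∑ j, e k j ≤ r) :
    (∑ t ∈ Finset.univ.filter
        (fun t : Fin r → Fin n ⊕ Unit => t ⟨0, by omega⟩ = Sum.inr ()),
      Astr n p r e t)
      = ((∑ k, (r - ∑ j, e k j) : ℕ) : ℝ) ∧
    (∑ k, (r - ∑ j, e k j))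
      = ∑ q ∈ Finset.Icc 1 (r - 1),
          (r - q) * (Finset.univ.filter (fun k : Fin p => ∑ j, e k j = q)).card := by
  refine ⟨?_, sum_tsub_eq_sum_Icc_mul_card_filter _ hlo hub⟩
  obtain ⟨m, rfl⟩ : ∃ m, r = m + 1 := ⟨r - 1, by omega⟩
  unfold Astr
  rw [Finset.sum_comm, Nat.cast_sum, Nat.add_sub_cancel]
  exact Finset.sum_congr rfl fun k _ =>
    sum_filter_head_eq_ite_prod_factorial_div (sum_strEdge n p (m + 1) e k (hub k)) (Sum.inr ())
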